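/- arXiv:1504.06789 — 2 statements merged into one kernel-verified Lean document; each statement's English description precedes it below -/
import Mathlib

section
/- For natural numbers N > 2 and K ≥ 1, the inequality √(N-1) < (N-1)(√K - √(K-1)) holds if and only if K < N²/(4(N-1)). -/
set_option maxHeartbeats 1600000 in
/-- Duffie–Zhu advantageousness criterion: for naturals `N > 2` and `K ≥ 1`,
`√(N-1) < (N-1)(√K - √(K-1))` iff `K < N²/(4(N-1))`. -/
theorem duffie_zhu_criterion (N K : ℕ) (hN : 2 < N) (hK : 1 ≤ K) :
    Real.sqrt ((N : ℝ) - 1) < ((N : ℝ) - 1) * (Real.sqrt K - Real.sqrt ((K : ℝ) - 1)) ↔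
      (K : ℝ) < (N : ℝ) ^ 2 / (4 * ((N : ℝ) - 1)) := by
  have hN3 : (3 : ℝ) ≤ (N : ℝ) := by exact_mod_cast hN
  have hK1 : (1 : ℝ) ≤ (K : ℝ) := by exact_mod_cast hK
  set x := Real.sqrt K with hxdef
  set y := Real.sqrt ((K : ℝ) - 1) with hydef
  set s := Real.sqrt ((N : ℝ) - 1) with hsdef
  have hx2 : x ^ 2 = (K : ℝ) := Real.sq_sqrt (by linarith)
  have hy2 : y ^ 2 = (K : ℝ) - 1 := Real.sq_sqrt (by linarith)
  have hs2 : s ^ 2 = (N : ℝ) - 1 := Real.sq_sqrt (by linarith)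
  have hx1 : 1 ≤ x := by
    rw [hxdef, show (1:ℝ) = Real.sqrt 1 by simp]
    exact Real.sqrt_le_sqrt (by linarith)
  have hy0 : 0 ≤ y := Real.sqrt_nonneg _
  have hs0 : 0 < s := Real.sqrt_pos.mpr (by linarith)
  have hs2ge : (2 : ℝ) ≤ s ^ 2 := by rw [hs2]; linarith
  have hxy : 0 < x + y := by linarith
  clear_value x y s
  have he : (x - y) * (x + y) = 1 := by ring_nf; rw [hx2, hy2]; ring
  have hden : (0 : ℝ) < 4 * ((N : ℝ) - 1) := by linarith
  rw [lt_div_iff₀ hden]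
  rw [show ((N:ℝ) - 1) = s ^ 2 from hs2.symm, show (K:ℝ) = x ^ 2 from hx2.symm,
    show (N:ℝ) = s ^ 2 + 1 by rw [hs2]; ring]
  constructor
  · intro h
    have h1 : x + y < s := by
      have h2 := mul_lt_mul_of_pos_right h hxy
      nlinarith [h2, he, hs0]
    have h3 : 2 * x ^ 2 - 1 + 2 * (x * y) < s ^ 2 := by nlinarith [h1, hs0.le, hxy.le]
    nlinarith [h3, mul_nonneg (by linarith : (0:ℝ) ≤ x) hy0, sq_nonneg (s ^ 2 + 1 - 2 * x ^ 2 - 2 * (x * y))]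
  · intro h
    have h2x : 2 * x ^ 2 < s ^ 2 + 1 := by nlinarith [h, hs2ge]
    have hxysq : (2 * (x * y)) ^ 2 < (s ^ 2 + 1 - 2 * x ^ 2) ^ 2 := by
      nlinarith [h, hx2, hy2]
    have hxylt : 2 * (x * y) < s ^ 2 + 1 - 2 * x ^ 2 :=
      lt_of_pow_lt_pow_left₀ 2 (by linarith) hxysq
    have hsq : (x + y) ^ 2 < s ^ 2 := by nlinarith [hxylt, hx2, hy2]
    have h1 : x + y < s := lt_of_pow_lt_pow_left₀ 2 hs0.le hsq
    have h4 : s * (x + y) < s ^ 2 := by nlinarith [mul_lt_mul_of_pos_left h1 hs0]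
    nlinarith [h4, he, hxy, hs0]
end

section
/- Let X be a real random variable symmetric about 0 whose characteristic function φ_X is absolutely integrable. Then the characteristic function of |X| satisfies φ_{|X|}(t) = φ_X(t) + i·H{φ_X}(t), where H denotes the Hilbert transform; in particular the imaginary part of φ_{|X|} equals the Hilbert transform of its real part (the analytic signal property). -/
/-!
Substituting `s = t ∓ u`, the truncated Hilbert transform is `(1/π) ∫_{u > ε} (φ(t-u) - φ(t+u))/u`,
and `cos((t-u)x) - cos((t+u)x) = 2 sin(tx) sin(ux)`. Since `sin(uX)/u` is not absolutely integrable
on `(ε, ∞)`, Fubini is applied on `[ε, R]`, which gives `E[2 sin(tX) (Si(RX) - Si(εX))]` with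
`Si` the sine integral. Dirichlet's integral `Si(R) → π/2`, proved from `1/v = ∫_0^∞ e^{-vτ} dτ`,
lets `R → ∞`, leaving `(1/π) E[sin(t|X|) (π - 2 Si(ε|X|))]`, which tends to `E[sin(t|X|)]` as
`ε → 0`. The real part is `E[cos(t|X|)] = E[cos(tX)] = φ(t)`.
-/

open MeasureTheory Filter Set Real Topology

noncomputable def sineIntegral (x : ℝ) : ℝ := ∫ v in 0..x, sinc v

@[fun_prop]
theorem continuous_sineIntegral : Continuous sineIntegral :=
  intervalIntegral.continuous_primitive (fun _ _ => continuous_sinc.intervalIntegrable _ _) 0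

@[simp]
theorem sineIntegral_zero : sineIntegral 0 = 0 := intervalIntegral.integral_same

theorem sineIntegral_neg (x : ℝ) : sineIntegral (-x) = -sineIntegral x := by
  have h := intervalIntegral.integral_comp_neg (a := 0) (b := x) sinc
  simp only [sinc_neg, neg_zero] at h
  rw [sineIntegral, sineIntegral, h, intervalIntegral.integral_symm]

theorem abs_sineIntegral_le_abs (x : ℝ) : |sineIntegral x| ≤ |x| := by
  simpa [sineIntegral] using intervalIntegral.norm_integral_le_of_norm_le_const (a := 0) (b := x)
    (f := sinc) (fun v _ => (abs_sinc_le_one v : ‖sinc v‖ ≤ 1))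

theorem sin_mul_div_eq_mul_sinc (a : ℝ) {u : ℝ} (hu : u ≠ 0) :
    sin (a * u) / u = a * sinc (a * u) := by
  rcases eq_or_ne a 0 with rfl | ha
  · simp
  · rw [sinc_of_ne_zero (mul_ne_zero ha hu)]
    field_simp

theorem integral_sin_mul_div (a : ℝ) {b c : ℝ} (hb : 0 < b) (hc : 0 < c) :
    ∫ u in b..c, sin (a * u) / u = sineIntegral (a * c) - sineIntegral (a * b) := by
  have hne : ∀ u ∈ uIcc b c, u ≠ 0 := fun u hu =>
    ((lt_min hb hc).trans_le hu.1).ne'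
  rw [intervalIntegral.integral_congr fun u hu => sin_mul_div_eq_mul_sinc a (hne u hu),
    intervalIntegral.integral_const_mul, intervalIntegral.mul_integral_comp_mul_left,
    sineIntegral, sineIntegral, intervalIntegral.integral_interval_sub_left] <;>
  exact continuous_sinc.intervalIntegrable _ _

noncomputable def dirichletRemainder (R τ : ℝ) : ℝ :=
  exp (-R * τ) * (cos R + τ * sin R) / (1 + τ ^ 2)

theorem hasDerivAt_neg_dirichletRemainder (τ v : ℝ) :
    HasDerivAt (fun v => -dirichletRemainder v τ) (sin v * exp (-v * τ)) v := by
  refine ((((hasDerivAt_neg v).mul_const τ).exp.fun_mul ((hasDerivAt_cos v).fun_add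
    ((hasDerivAt_sin v).const_mul τ))).div_const (1 + τ ^ 2)).fun_neg.congr_deriv ?_
  field_simp
  ring

theorem integral_sin_mul_exp_neg_mul (τ R : ℝ) :
    ∫ v in 0..R, sin v * exp (-v * τ) = (1 + τ ^ 2)⁻¹ - dirichletRemainder R τ := by
  rw [intervalIntegral.integral_eq_sub_of_hasDerivAt
    (fun v _ => hasDerivAt_neg_dirichletRemainder τ v)
    ((by fun_prop : Continuous fun v => sin v * exp (-v * τ)).intervalIntegrable _ _)]
  simp [dirichletRemainder]
  ring

theorem integral_exp_neg_mul_Ioi {v : ℝ} (hv : 0 < v) : ∫ τ in Ioi 0, exp (-v * τ) = v⁻¹ := by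
  rw [integral_exp_mul_Ioi (neg_neg_of_pos hv)]
  simp

theorem abs_dirichletRemainder_le (R : ℝ) {τ : ℝ} (hτ : 0 ≤ τ) :
    |dirichletRemainder R τ| ≤ 2 * exp (-R * τ) := by
  have hpos : 0 < 1 + τ ^ 2 := by positivity
  have hnum : |cos R + τ * sin R| ≤ 2 * (1 + τ ^ 2) := by
    calc |cos R + τ * sin R| ≤ |cos R| + τ * |sin R| := by
          simpa [abs_mul, abs_of_nonneg hτ] using abs_add_le (cos R) (τ * sin R)
      _ ≤ 1 + τ * 1 := by gcongr; exacts [abs_cos_le_one R, abs_sin_le_one R]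
      _ ≤ 2 * (1 + τ ^ 2) := by nlinarith [sq_nonneg (τ - 1)]
  rw [dirichletRemainder, abs_div, abs_mul, abs_exp, abs_of_pos hpos, div_le_iff₀ hpos]
  calc exp (-R * τ) * |cos R + τ * sin R| ≤ exp (-R * τ) * (2 * (1 + τ ^ 2)) := by gcongr
    _ = _ := by ring

theorem integrableOn_dirichletRemainder {R : ℝ} (hR : 0 < R) :
    IntegrableOn (dirichletRemainder R) (Ioi 0) := by
  refine ((integrableOn_exp_mul_Ioi (neg_neg_of_pos hR) 0).const_mul 2).mono'
    (Continuous.aestronglyMeasurable (.div (by fun_prop) (by fun_prop) fun τ => by positivity)) ?_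
  filter_upwards [ae_restrict_mem measurableSet_Ioi] with τ hτ
  exact abs_dirichletRemainder_le R (le_of_lt hτ)

theorem sineIntegral_eq_pi_div_two_sub {R : ℝ} (hR : 0 < R) :
    sineIntegral R = π / 2 - ∫ τ in Ioi 0, dirichletRemainder R τ := by
  have hsinc : ∀ v ∈ Ioc 0 R, sinc v = ∫ τ in Ioi 0, sin v * exp (-v * τ) := fun v hv => by
    rw [integral_const_mul, integral_exp_neg_mul_Ioi hv.1, sinc_of_ne_zero hv.1.ne', div_eq_mul_inv]
  have hint : Integrable (Function.uncurry fun v τ => sin v * exp (-v * τ))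
      ((volume.restrict (Ioc 0 R)).prod (volume.restrict (Ioi 0))) := by
    have hmeas : AEStronglyMeasurable (Function.uncurry fun v τ => sin v * exp (-v * τ))
        ((volume.restrict (Ioc 0 R)).prod (volume.restrict (Ioi 0))) :=
      (by fun_prop : Continuous fun p : ℝ × ℝ => sin p.1 * exp (-p.1 * p.2)).aestronglyMeasurable
    refine (integrable_prod_iff hmeas).2 ⟨?_, ?_⟩
    · filter_upwards [ae_restrict_mem measurableSet_Ioc] with v hv
      exact (integrableOn_exp_mul_Ioi (neg_neg_of_pos hv.1) 0).const_mul (sin v)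
    · refine (integrableOn_const (C := (1 : ℝ)) measure_Ioc_lt_top.ne).mono'
        hmeas.norm.integral_prod_right' ?_
      filter_upwards [ae_restrict_mem measurableSet_Ioc] with v hv
      simp only [Function.uncurry_apply_pair, norm_mul, norm_eq_abs, abs_exp, integral_const_mul]
      rw [integral_exp_neg_mul_Ioi hv.1, abs_abs, ← abs_mul, ← div_eq_mul_inv,
        ← sinc_of_ne_zero hv.1.ne']
      exact abs_sinc_le_one v
  rw [sineIntegral, intervalIntegral.integral_of_le hR.le,
    setIntegral_congr_fun measurableSet_Ioc hsinc, integral_integral_swap hint]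
  simp_rw [← intervalIntegral.integral_of_le hR.le, integral_sin_mul_exp_neg_mul]
  rw [integral_sub integrable_inv_one_add_sq.integrableOn (integrableOn_dirichletRemainder hR),
    integral_Ioi_inv_one_add_sq, arctan_zero, sub_zero]

theorem abs_sineIntegral_sub_pi_div_two_le {R : ℝ} (hR : 0 < R) :
    |sineIntegral R - π / 2| ≤ 2 / R := by
  rw [sineIntegral_eq_pi_div_two_sub hR, sub_sub_cancel_left, abs_neg]
  calc |∫ τ in Ioi 0, dirichletRemainder R τ|
      ≤ ∫ τ in Ioi 0, 2 * exp (-R * τ) := by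
        refine norm_integral_le_of_norm_le (f := dirichletRemainder R)
          ((integrableOn_exp_mul_Ioi (neg_neg_of_pos hR) 0).const_mul 2) ?_
        filter_upwards [ae_restrict_mem measurableSet_Ioi] with τ hτ
        exact abs_dirichletRemainder_le R (le_of_lt hτ)
    _ = 2 / R := by rw [integral_const_mul, integral_exp_neg_mul_Ioi hR, div_eq_mul_inv]

theorem tendsto_sineIntegral_atTop : Tendsto sineIntegral atTop (𝓝 (π / 2)) := by
  refine tendsto_iff_norm_sub_tendsto_zero.2 (squeeze_zero' (.of_forall fun _ => norm_nonneg _)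
    ?_ (tendsto_const_nhds.div_atTop tendsto_id : Tendsto (fun R : ℝ => 2 / R) atTop (𝓝 0)))
  filter_upwards [eventually_gt_atTop 0] with R hR
  exact abs_sineIntegral_sub_pi_div_two_le hR

theorem abs_sineIntegral_le (x : ℝ) : |sineIntegral x| ≤ 4 := by
  wlog hx : 0 ≤ x generalizing x
  · simpa [sineIntegral_neg] using this (-x) (by linarith)
  rcases le_or_gt x 2 with hx2 | hx2
  · exact (abs_sineIntegral_le_abs x).trans (by rw [abs_of_nonneg hx]; linarith)
  · have h := abs_le.1 (abs_sineIntegral_sub_pi_div_two_le (by linarith : (0 : ℝ) < x))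
    have h2 : 2 / x ≤ 1 := (div_le_one (by linarith)).2 hx2.le
    exact abs_le.2 ⟨by linarith [pi_pos], by linarith [pi_le_four]⟩

theorem tendsto_sin_mul_sineIntegral_sub (t a ε : ℝ) :
    Tendsto (fun R => 2 * sin (t * a) * (sineIntegral (a * R) - sineIntegral (a * ε))) atTop
      (𝓝 (sin (t * |a|) * (π - 2 * sineIntegral (|a| * ε)))) := by
  wlog ha : 0 ≤ a generalizing a
  · convert this (-a) (by linarith) using 2 with R
    · simp only [mul_neg, neg_mul, sin_neg, sineIntegral_neg]
      ring
    · rw [abs_neg]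
  rw [abs_of_nonneg ha]
  rcases ha.eq_or_lt with rfl | ha
  · simp
  · have hSi : Tendsto (fun R => sineIntegral (a * R)) atTop (𝓝 (π / 2)) :=
      tendsto_sineIntegral_atTop.comp (tendsto_id.const_mul_atTop ha)
    convert (hSi.sub_const (sineIntegral (a * ε))).const_mul (2 * sin (t * a)) using 2
    ring

noncomputable def truncHilbert (f : ℝ → ℝ) (ε t : ℝ) : ℝ :=
  1 / π * ((∫ s in Iio (t - ε), f s / (t - s)) + ∫ s in Ioi (t + ε), f s / (t - s))

theorem setIntegral_Iio_sub_div_sub (f : ℝ → ℝ) (t ε : ℝ) :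
    ∫ s in Iio (t - ε), f s / (t - s) = ∫ u in Ioi ε, f (t - u) / u := by
  rw [← (volume.measurePreserving_sub_left t).setIntegral_preimage_emb
    (measurableEmbedding_subLeft t)]
  simp

theorem setIntegral_Ioi_add_div_sub (f : ℝ → ℝ) (t ε : ℝ) :
    ∫ s in Ioi (t + ε), f s / (t - s) = -∫ u in Ioi ε, f (t + u) / u := by
  rw [← (measurePreserving_add_left volume t).setIntegral_preimage_emb
    (measurableEmbedding_addLeft t), ← integral_neg]
  simp [div_neg]

theorem integrableOn_div_Ioi {f : ℝ → ℝ} (hf : Integrable f) {ε : ℝ} (hε : 0 < ε) :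
    IntegrableOn (fun u => f u / u) (Ioi ε) := by
  refine (hf.norm.const_mul ε⁻¹).integrableOn.mono'
    (hf.aemeasurable.div aemeasurable_id).aestronglyMeasurable.restrict ?_
  filter_upwards [ae_restrict_mem measurableSet_Ioi] with u hu
  rw [norm_div, norm_eq_abs u, abs_of_pos (hε.trans hu), div_eq_inv_mul]
  gcongr
  exact hu.le

theorem truncHilbert_eq_integral_Ioi {f : ℝ → ℝ} (hf : Integrable f) (t : ℝ) {ε : ℝ}
    (hε : 0 < ε) : truncHilbert f ε t = 1 / π * ∫ u in Ioi ε, (f (t - u) - f (t + u)) / u := by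
  rw [truncHilbert, setIntegral_Iio_sub_div_sub, setIntegral_Ioi_add_div_sub, ← sub_eq_add_neg,
    ← integral_sub (integrableOn_div_Ioi (hf.comp_sub_left t) hε)
      (integrableOn_div_Ioi (hf.comp_add_left t) hε)]
  simp_rw [sub_div]

section CosineTransform

variable {Ω : Type*} [MeasurableSpace Ω] {μ : Measure Ω} [IsFiniteMeasure μ] {X : Ω → ℝ}
  {φ : ℝ → ℝ}

theorem integrable_cos_mul (hX : Measurable X) (t : ℝ) : Integrable (fun ω => cos (t * X ω)) μ :=
  .of_bound (by fun_prop) 1 (.of_forall fun ω => abs_cos_le_one _)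

theorem sub_eq_integral_sin_mul_sin (hX : Measurable X) (hφ : ∀ s, φ s = ∫ ω, cos (s * X ω) ∂μ)
    (t u : ℝ) : φ (t - u) - φ (t + u) = ∫ ω, 2 * sin (t * X ω) * sin (X ω * u) ∂μ := by
  rw [hφ, hφ, ← integral_sub (integrable_cos_mul hX _) (integrable_cos_mul hX _)]
  congr 1 with ω
  rw [sub_mul, add_mul, cos_sub, cos_add, mul_comm u]
  ring

theorem intervalIntegral_sub_div_eq_integral_sineIntegral (hX : Measurable X)
    (hφ : ∀ s, φ s = ∫ ω, cos (s * X ω) ∂μ)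
    (t : ℝ) {ε R : ℝ} (hε : 0 < ε) (hεR : ε ≤ R) :
    ∫ u in ε..R, (φ (t - u) - φ (t + u)) / u =
      ∫ ω, 2 * sin (t * X ω) * (sineIntegral (X ω * R) - sineIntegral (X ω * ε)) ∂μ := by
  have hint : Integrable (Function.uncurry fun u ω => 2 * sin (t * X ω) * sin (X ω * u) / u)
      ((volume.restrict (Ioc ε R)).prod μ) := by
    have : IsFiniteMeasure (volume.restrict (Ioc ε R)) :=
      isFiniteMeasure_restrict.2 measure_Ioc_lt_top.ne
    refine .of_bound (Measurable.aestronglyMeasurable (by fun_prop)) (2 / ε) ?_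
    filter_upwards [Measure.quasiMeasurePreserving_fst.ae (ae_restrict_mem measurableSet_Ioc)]
      with ⟨u, ω⟩ hu
    have hu0 : 0 < u := hε.trans hu.1
    rw [Function.uncurry_apply_pair, norm_div, norm_of_nonneg hu0.le, norm_mul, norm_mul]
    refine div_le_div₀ zero_le_two ?_ hε hu.1.le
    calc ‖(2 : ℝ)‖ * ‖sin (t * X ω)‖ * ‖sin (X ω * u)‖ ≤ 2 * 1 * 1 := by
          gcongr <;> simp [abs_sin_le_one]
      _ = 2 := by norm_num
  simp_rw [sub_eq_integral_sin_mul_sin hX hφ, ← integral_div]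
  rw [intervalIntegral.integral_of_le hεR, integral_integral_swap hint]
  congr 1 with ω
  simp_rw [mul_div_assoc]
  rw [integral_const_mul, ← intervalIntegral.integral_of_le hεR,
    integral_sin_mul_div _ hε (hε.trans_le hεR)]

theorem tendsto_integral_sin_mul_sineIntegral_sub (hX : Measurable X) (t ε : ℝ) :
    Tendsto (fun R => ∫ ω, 2 * sin (t * X ω) *
        (sineIntegral (X ω * R) - sineIntegral (X ω * ε)) ∂μ) atTop
      (𝓝 (∫ ω, sin (t * |X ω|) * (π - 2 * sineIntegral (|X ω| * ε)) ∂μ)) := by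
  refine tendsto_integral_filter_of_dominated_convergence (fun _ => 16)
    (.of_forall fun R => Measurable.aestronglyMeasurable (by fun_prop))
    (.of_forall fun R => .of_forall fun ω => ?_) (integrable_const _)
    (.of_forall fun ω => tendsto_sin_mul_sineIntegral_sub t (X ω) ε)
  simp only [norm_mul, norm_eq_abs]
  calc |2| * |sin (t * X ω)| * |sineIntegral (X ω * R) - sineIntegral (X ω * ε)|
      ≤ 2 * 1 * (4 + 4) := by
        gcongr
        · norm_num
        · exact abs_sin_le_one _
        · exact (abs_sub _ _).trans (add_le_add (abs_sineIntegral_le _) (abs_sineIntegral_le _))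
    _ = 16 := by norm_num

theorem truncHilbert_eq_integral_sin_mul (hX : Measurable X)
    (hφ : ∀ s, φ s = ∫ ω, cos (s * X ω) ∂μ) (hφint : Integrable φ) (t : ℝ) {ε : ℝ}
    (hε : 0 < ε) :
    truncHilbert φ ε t =
      1 / π * ∫ ω, sin (t * |X ω|) * (π - 2 * sineIntegral (|X ω| * ε)) ∂μ := by
  rw [truncHilbert_eq_integral_Ioi hφint t hε]
  congr 1
  refine tendsto_nhds_unique (intervalIntegral_tendsto_integral_Ioi ε
    (integrableOn_div_Ioi ((hφint.comp_sub_left t).sub (hφint.comp_add_left t)) hε)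
    tendsto_id) ?_
  refine (tendsto_integral_sin_mul_sineIntegral_sub hX t ε).congr' ?_
  filter_upwards [eventually_ge_atTop ε] with R hR
  exact (intervalIntegral_sub_div_eq_integral_sineIntegral hX hφ t hε hR).symm

theorem continuous_integral_sin_mul_sineIntegral (hX : Measurable X) (t : ℝ) :
    Continuous fun ε => ∫ ω, sin (t * |X ω|) * (π - 2 * sineIntegral (|X ω| * ε)) ∂μ := by
  refine continuous_of_dominated (bound := fun _ => π + 8)
    (fun ε => Measurable.aestronglyMeasurable (by fun_prop))
    (fun ε => .of_forall fun ω => ?_) (integrable_const _) (.of_forall fun ω => by fun_prop)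
  simp only [norm_mul, norm_eq_abs]
  calc |sin (t * |X ω|)| * |π - 2 * sineIntegral (|X ω| * ε)| ≤ 1 * (π + 2 * 4) := by
        gcongr
        · exact abs_sin_le_one _
        · refine (abs_sub _ _).trans (add_le_add (abs_of_pos pi_pos).le ?_)
          rw [abs_mul, abs_two]
          gcongr
          exact abs_sineIntegral_le _
    _ = π + 8 := by ring

theorem tendsto_truncHilbert_of_eq_integral_cos (hX : Measurable X)
    (hφ : ∀ s, φ s = ∫ ω, cos (s * X ω) ∂μ) (hφint : Integrable φ) (t : ℝ) :
    Tendsto (fun ε => truncHilbert φ ε t) (𝓝[>] 0) (𝓝 (∫ ω, sin (t * |X ω|) ∂μ)) := by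
  have h0 : 1 / π * ∫ ω, sin (t * |X ω|) * (π - 2 * sineIntegral (|X ω| * 0)) ∂μ =
      ∫ ω, sin (t * |X ω|) ∂μ := by
    simp only [mul_zero, sineIntegral_zero, sub_zero, integral_mul_const]
    field_simp
  rw [← h0]
  refine ((((continuous_integral_sin_mul_sineIntegral hX t).tendsto 0).const_mul
    (1 / π)).mono_left nhdsWithin_le_nhds).congr' ?_
  filter_upwards [self_mem_nhdsWithin] with ε hε
  exact (truncHilbert_eq_integral_sin_mul hX hφ hφint t hε).symm

theorem I_mul_ofReal_mul_ofReal (t x : ℝ) :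
    Complex.I * t * x = ↑(t * x) * Complex.I := by
  push_cast
  ring

theorem integrable_exp_I_mul (hX : Measurable X) (t : ℝ) :
    Integrable (fun ω => Complex.exp (Complex.I * t * X ω)) μ := by
  refine .of_bound (by fun_prop) 1 (.of_forall fun ω => ?_)
  rw [I_mul_ofReal_mul_ofReal, Complex.norm_exp_ofReal_mul_I]

theorem re_integral_exp_I_mul (hX : Measurable X) (t : ℝ) :
    (∫ ω, Complex.exp (Complex.I * t * X ω) ∂μ).re = ∫ ω, cos (t * X ω) ∂μ := by
  rw [← RCLike.re_to_complex, ← integral_re (integrable_exp_I_mul hX t)]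
  congr 1 with ω
  rw [RCLike.re_to_complex, I_mul_ofReal_mul_ofReal, Complex.exp_ofReal_mul_I_re]

theorem im_integral_exp_I_mul (hX : Measurable X) (t : ℝ) :
    (∫ ω, Complex.exp (Complex.I * t * X ω) ∂μ).im = ∫ ω, sin (t * X ω) ∂μ := by
  rw [← RCLike.im_to_complex, ← integral_im (integrable_exp_I_mul hX t)]
  congr 1 with ω
  rw [RCLike.im_to_complex, I_mul_ofReal_mul_ofReal, Complex.exp_ofReal_mul_I_im]

end CosineTransform

theorem charFun_abs_analytic_signal_general
    {Ω : Type*} [MeasurableSpace Ω] (P : Measure Ω) [IsProbabilityMeasure P]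
    (X : Ω → ℝ) (hX : Measurable X)
    (φ : ℝ → ℝ)
    (hφ : ∀ t : ℝ, (φ t : ℂ) = ∫ ω, Complex.exp (Complex.I * t * X ω) ∂P)
    (hφint : Integrable φ volume) :
    ∀ t : ℝ,
      (∫ ω, Complex.exp (Complex.I * t * |X ω|) ∂P).re = φ t ∧
      Tendsto
        (fun ε : ℝ =>
          (1 / Real.pi) *
            ((∫ s in Set.Iio (t - ε), φ s / (t - s)) +
              ∫ s in Set.Ioi (t + ε), φ s / (t - s)))
        (nhdsWithin 0 (Set.Ioi 0))
        (nhds ((∫ ω, Complex.exp (Complex.I * t * |X ω|) ∂P).im)) := by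
  intro t
  have hcos : ∀ s, φ s = ∫ ω, cos (s * X ω) ∂P := fun s => by
    rw [← re_integral_exp_I_mul hX s, ← hφ s, Complex.ofReal_re]
  rw [re_integral_exp_I_mul hX.abs, im_integral_exp_I_mul hX.abs, hcos t]
  refine ⟨integral_congr_ae (.of_forall fun ω => ?_),
    tendsto_truncHilbert_of_eq_integral_cos hX hcos hφint t⟩
  rcases abs_choice (X ω) with h | h <;> simp [h]

/-- Analytic-signal property: if `X` is symmetric about 0 and its (real-valued) characteristic
function `φ_X` is absolutely integrable, then the characteristic function of `|X|` satisfies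
`φ_{|X|} = φ_X + i·H{φ_X}`: its real part equals `φ_X` and its imaginary part equals the
Hilbert transform (Cauchy principal value) of `φ_X`. -/
theorem charFun_abs_analytic_signal
    {Ω : Type*} [MeasurableSpace Ω] (P : Measure Ω) [IsProbabilityMeasure P]
    (X : Ω → ℝ) (hX : Measurable X)
    (hsymm : Measure.map (fun ω => -X ω) P = Measure.map X P)
    (φ : ℝ → ℝ)
    (hφ : ∀ t : ℝ, (φ t : ℂ) = ∫ ω, Complex.exp (Complex.I * t * X ω) ∂P)
    (hφint : Integrable φ volume) :
    ∀ t : ℝ,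
      (∫ ω, Complex.exp (Complex.I * t * |X ω|) ∂P).re = φ t ∧
      Tendsto
        (fun ε : ℝ =>
          (1 / Real.pi) *
            ((∫ s in Set.Iio (t - ε), φ s / (t - s)) +
              ∫ s in Set.Ioi (t + ε), φ s / (t - s)))
        (nhdsWithin 0 (Set.Ioi 0))
        (nhds ((∫ ω, Complex.exp (Complex.I * t * |X ω|) ∂P).im)) :=
  charFun_abs_analytic_signal_general P X hX φ hφ hφint
end
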